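/- Let d ≥ 1 be an integer, 1 < p < ∞, 0 < s < 1, m ≥ 1 and λ ≥ 0 real numbers, and let u : ℝ^d → ℝ be measurable. Then, as integrals with values in [0,∞] and with nonnegative integrands, ∫_{ℝ^d}∫_{ℝ^d} (u(x)^m − u(y)^m)^{p−1} · ( G_λ(u(x))^m − G_λ(u(y))^m ) / |x−y|^{d+sp} dx dy ≥ ∫_{ℝ^d}∫_{ℝ^d} | G_λ(u(x))^m − G_λ(u(y))^m |^p / |x−y|^{d+sp} dx dy, where all powers of real numbers are signed powers. -/
import Mathlib


open MeasureTheory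

/-- The signed truncator `G_λ(s) = sign(s) · max(|s| − λ, 0)`. -/
noncomputable def Gtrunc (lam s : ℝ) : ℝ := Real.sign s * max (|s| - lam) 0

/-- The signed power `r^β := |r|^(β−1) · r` for a real exponent `β > 0`. -/
noncomputable def spow (r β : ℝ) : ℝ := |r| ^ (β - 1) * r

lemma spow_neg (r β : ℝ) : spow (-r) β = - spow r β := by
  simp [spow]

lemma spow_of_nonneg {r : ℝ} (h : 0 ≤ r) {β : ℝ} (hβ : 0 < β) :
    spow r β = r ^ β := by
  rcases h.eq_or_lt with h0 | h0
  · simp [spow, ← h0, Real.zero_rpow hβ.ne']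
  · rw [spow, abs_of_pos h0, ← Real.rpow_add_one h0.ne']
    ring_nf

lemma spow_nonpos_of_nonpos {r : ℝ} (h : r ≤ 0) (β : ℝ) : spow r β ≤ 0 :=
  mul_nonpos_of_nonneg_of_nonpos (Real.rpow_nonneg (abs_nonneg r) _) h

lemma spow_monotone {β : ℝ} (hβ : 0 < β) : Monotone (fun r => spow r β) := by
  intro a b hab
  show spow a β ≤ spow b β
  rcases le_total 0 a with ha | ha
  · rw [spow_of_nonneg ha hβ, spow_of_nonneg (ha.trans hab) hβ]
    exact Real.rpow_le_rpow ha hab hβ.le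
  · rcases le_total b 0 with hb | hb
    · have : spow (-b) β ≤ spow (-a) β := by
        rw [spow_of_nonneg (neg_nonneg.2 hb) hβ, spow_of_nonneg (neg_nonneg.2 ha) hβ]
        exact Real.rpow_le_rpow (neg_nonneg.2 hb) (by linarith) hβ.le
      simp only [spow_neg] at this
      simpa using this
    · calc spow a β ≤ 0 := spow_nonpos_of_nonpos ha β
        _ ≤ spow b β := by rw [spow_of_nonneg hb hβ]; positivity

lemma Gtrunc_of_nonneg {lam : ℝ} (hlam : 0 ≤ lam) {s : ℝ} (hs : 0 ≤ s) :
    Gtrunc lam s = max (s - lam) 0 := by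
  rcases hs.eq_or_lt with h0 | h0
  · simp [Gtrunc, ← h0, Real.sign_zero, max_eq_right (by linarith : -lam ≤ 0)]
  · rw [Gtrunc, Real.sign_of_pos h0, abs_of_pos h0, one_mul]

lemma Gtrunc_neg (lam s : ℝ) : Gtrunc lam (-s) = - Gtrunc lam s := by
  simp [Gtrunc, Real.sign_neg]

lemma Gtrunc_monotone {lam : ℝ} (hlam : 0 ≤ lam) : Monotone (Gtrunc lam) := by
  intro a b hab
  rcases le_total 0 a with ha | ha
  · rw [Gtrunc_of_nonneg hlam ha, Gtrunc_of_nonneg hlam (ha.trans hab)]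
    exact max_le_max (by linarith) le_rfl
  · rcases le_total b 0 with hb | hb
    · have : Gtrunc lam (-b) ≤ Gtrunc lam (-a) := by
        rw [Gtrunc_of_nonneg hlam (neg_nonneg.2 hb), Gtrunc_of_nonneg hlam (neg_nonneg.2 ha)]
        exact max_le_max (by linarith) le_rfl
      simp only [Gtrunc_neg] at this
      linarith
    · calc Gtrunc lam a = -Gtrunc lam (-a) := by rw [Gtrunc_neg]; ring
        _ ≤ 0 := by
            rw [Gtrunc_of_nonneg hlam (neg_nonneg.2 ha)]
            simp [le_max_right]
        _ ≤ Gtrunc lam b := by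
            rw [Gtrunc_of_nonneg hlam hb]; exact le_max_right _ _

/-- Shift inequality from convexity of `x ↦ x ^ m`. -/
lemma rpow_shift {m : ℝ} (hm : 1 ≤ m) {x y t : ℝ} (hx : 0 ≤ x) (hxy : x ≤ y)
    (ht : 0 ≤ t) : (x + t) ^ m - x ^ m ≤ (y + t) ^ m - y ^ m := by
  rcases ht.eq_or_lt with h0 | h0
  · simp [← h0]
  rcases hxy.eq_or_lt with hxy0 | hxy0
  · simp [hxy0]
  have hconv := convexOn_rpow hm
  have hy : (0:ℝ) ≤ y := hx.trans hxy
  have hxt : (0:ℝ) ≤ x + t := by linarith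
  have hyt : (0:ℝ) ≤ y + t := by linarith
  set f : ℝ → ℝ := fun x : ℝ => x ^ m with hf
  -- slope f x (x+t) ≤ slope f x (y+t)
  have h1 : slope f x (x + t) ≤ slope f x (y + t) :=
    hconv.slope_mono (Set.mem_Ici.2 hx)
      ⟨Set.mem_Ici.2 hxt, by intro h; simp only [Set.mem_singleton_iff] at h; linarith⟩
      ⟨Set.mem_Ici.2 hyt, by intro h; simp only [Set.mem_singleton_iff] at h; linarith⟩
      (by linarith)
  have h2 : slope f (y + t) x ≤ slope f (y + t) y :=
    hconv.slope_mono (Set.mem_Ici.2 hyt)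
      ⟨Set.mem_Ici.2 hx, by intro h; simp only [Set.mem_singleton_iff] at h; linarith⟩
      ⟨Set.mem_Ici.2 hy, by intro h; simp only [Set.mem_singleton_iff] at h; linarith⟩
      hxy
  rw [slope_comm f (y+t) x, slope_comm f (y+t) y] at h2
  have hchain : slope f x (x + t) ≤ slope f y (y + t) := h1.trans h2
  rw [slope_def_field, slope_def_field] at hchain
  have e1 : x + t - x = t := by ring
  have e2 : y + t - y = t := by ring
  rw [e1, e2, div_le_div_iff_of_pos_right h0] at hchain
  exact hchain

lemma hm_pos {m : ℝ} (hm : 1 ≤ m) : (0:ℝ) < m := lt_of_lt_of_le one_pos hm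

/-- Core inequality in the nonnegative case. -/
lemma key_nonneg {m lam : ℝ} (hm : 1 ≤ m) (hlam : 0 ≤ lam) {b a : ℝ}
    (h0b : 0 ≤ b) (hba : b ≤ a) :
    spow (Gtrunc lam a) m - spow (Gtrunc lam b) m ≤ spow a m - spow b m := by
  have h0a : 0 ≤ a := h0b.trans hba
  have hmp := hm_pos hm
  set v : ℝ := max (b - lam) 0 with hv
  set u : ℝ := max (a - lam) 0 with hu
  have hv0 : 0 ≤ v := le_max_right _ _
  have hu0 : 0 ≤ u := le_max_right _ _
  have hvu : v ≤ u := max_le_max (by linarith) le_rfl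
  set t : ℝ := u - v with htdef
  have ht : 0 ≤ t := by simp [htdef]; linarith
  have hvb : v ≤ b := max_le (by linarith) h0b
  have hbt : b + t ≤ a := by
    have h1 : b - lam ≤ v := le_max_left _ _
    have h2 : u ≤ v + (a - b) := max_le (by linarith) (by linarith)
    simp only [htdef]; linarith
  rw [Gtrunc_of_nonneg hlam h0a, Gtrunc_of_nonneg hlam h0b, ← hu, ← hv,
    spow_of_nonneg hu0 hmp, spow_of_nonneg hv0 hmp,
    spow_of_nonneg h0a hmp, spow_of_nonneg h0b hmp]
  have huvt : u = v + t := by simp [htdef]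
  calc u ^ m - v ^ m = (v + t) ^ m - v ^ m := by rw [huvt]
    _ ≤ (b + t) ^ m - b ^ m := rpow_shift hm hv0 hvb ht
    _ ≤ a ^ m - b ^ m := by
        have : (b + t) ^ m ≤ a ^ m := Real.rpow_le_rpow (by linarith) hbt hmp.le
        linarith

lemma FleH {m lam : ℝ} (hm : 1 ≤ m) (hlam : 0 ≤ lam) {a : ℝ} (ha : 0 ≤ a) :
    spow (Gtrunc lam a) m ≤ spow a m := by
  have hmp := hm_pos hm
  rw [Gtrunc_of_nonneg hlam ha, spow_of_nonneg (le_max_right _ _) hmp,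
    spow_of_nonneg ha hmp]
  exact Real.rpow_le_rpow (le_max_right _ _) (max_le (by linarith) ha) hmp.le

/-- Core inequality, general case. -/
lemma key {m lam : ℝ} (hm : 1 ≤ m) (hlam : 0 ≤ lam) {b a : ℝ} (hba : b ≤ a) :
    spow (Gtrunc lam a) m - spow (Gtrunc lam b) m ≤ spow a m - spow b m := by
  rcases le_total 0 b with h0b | hb0
  · exact key_nonneg hm hlam h0b hba
  · rcases le_total a 0 with ha0 | h0a
    · have := key_nonneg hm hlam (neg_nonneg.2 ha0) (by linarith : -a ≤ -b)
      simp only [Gtrunc_neg, spow_neg] at this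
      linarith
    · have h1 : spow (Gtrunc lam a) m ≤ spow a m := FleH hm hlam h0a
      have h2 : spow (Gtrunc lam (-b)) m ≤ spow (-b) m :=
        FleH hm hlam (neg_nonneg.2 hb0)
      simp only [Gtrunc_neg, spow_neg] at h2
      linarith

/-- The pointwise inequality with an order assumption. -/
lemma pointwise_le {p m lam : ℝ} (hp : 1 < p) (hm : 1 ≤ m) (hlam : 0 ≤ lam)
    {b a : ℝ} (hba : b ≤ a) :
    |spow (Gtrunc lam a) m - spow (Gtrunc lam b) m| ^ p ≤
      spow (spow a m - spow b m) (p - 1) *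
        (spow (Gtrunc lam a) m - spow (Gtrunc lam b) m) := by
  have hmp := hm_pos hm
  have hq : (0:ℝ) < p - 1 := by linarith
  set A : ℝ := spow (Gtrunc lam a) m - spow (Gtrunc lam b) m with hA
  set X : ℝ := spow a m - spow b m with hX
  have hA0 : 0 ≤ A := by
    have := spow_monotone hmp ((Gtrunc_monotone hlam) hba)
    simp only [hA]; linarith
  have hX0 : 0 ≤ X := by
    have := spow_monotone hmp hba
    simp only [hX]; linarith
  have hAX : A ≤ X := key hm hlam hba
  rw [abs_of_nonneg hA0, spow_of_nonneg hX0 hq]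
  rcases hA0.eq_or_lt with h0 | h0
  · rw [← h0, Real.zero_rpow (by positivity : p ≠ 0), mul_zero]
  · have hX0' : 0 < X := lt_of_lt_of_le h0 hAX
    calc A ^ p = A ^ (p - 1) * A := by
          rw [← Real.rpow_add_one h0.ne']; ring_nf
      _ ≤ X ^ (p - 1) * A :=
          mul_le_mul_of_nonneg_right (Real.rpow_le_rpow hA0 hAX hq.le) hA0

/-- The pointwise inequality. -/
lemma pointwise {p m lam : ℝ} (hp : 1 < p) (hm : 1 ≤ m) (hlam : 0 ≤ lam) (a b : ℝ) :
    |spow (Gtrunc lam a) m - spow (Gtrunc lam b) m| ^ p ≤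
      spow (spow a m - spow b m) (p - 1) *
        (spow (Gtrunc lam a) m - spow (Gtrunc lam b) m) := by
  rcases le_total b a with h | h
  · exact pointwise_le hp hm hlam h
  · have := pointwise_le hp hm hlam h
    have e1 : spow (Gtrunc lam a) m - spow (Gtrunc lam b) m
        = -(spow (Gtrunc lam b) m - spow (Gtrunc lam a) m) := by ring
    have e2 : spow a m - spow b m = -(spow b m - spow a m) := by ring
    rw [e1, e2, abs_neg, spow_neg]
    linarith [this]

/-- Integral inequality underlying Lemma 5.2: for measurable `u : ℝ^d → ℝ`,
`1 < p < ∞`, `0 < s < 1`, `m ≥ 1`, `λ ≥ 0`,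
`∫∫ (u(x)^m − u(y)^m)^(p−1) (G_λ(u(x))^m − G_λ(u(y))^m) / |x−y|^(d+sp)
  ≥ ∫∫ |G_λ(u(x))^m − G_λ(u(y))^m|^p / |x−y|^(d+sp)`, with signed powers. -/
theorem stmt17 (d : ℕ) (hd : 1 ≤ d) (p s m lam : ℝ) (hp : 1 < p)
    (hs : s ∈ Set.Ioo (0 : ℝ) 1) (hm : 1 ≤ m) (hlam : 0 ≤ lam)
    (u : EuclideanSpace ℝ (Fin d) → ℝ) (hu : Measurable u) :
    (∫⁻ x, ∫⁻ y, ENNReal.ofReal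
        (|spow (Gtrunc lam (u x)) m - spow (Gtrunc lam (u y)) m| ^ p /
          ‖x - y‖ ^ ((d : ℝ) + s * p)))
      ≤ ∫⁻ x, ∫⁻ y, ENNReal.ofReal
          (spow (spow (u x) m - spow (u y) m) (p - 1) *
              (spow (Gtrunc lam (u x)) m - spow (Gtrunc lam (u y)) m) /
            ‖x - y‖ ^ ((d : ℝ) + s * p)) := by
  refine lintegral_mono fun x => lintegral_mono fun y => ?_
  set D : ℝ := ‖x - y‖ ^ ((d : ℝ) + s * p) with hD
  have hD0 : 0 ≤ D := Real.rpow_nonneg (norm_nonneg _) _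
  exact ENNReal.ofReal_le_ofReal
    (div_le_div_of_nonneg_right (pointwise hp hm hlam (u x) (u y)) hD0)
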